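/- arXiv:0806.3379 — 4 statements merged into one kernel-verified Lean document; each statement's English description precedes it below -/
import Mathlib

section
/- Let γ∈(−3,0). Define σ(z), for z∈ℝ³\{0}, as the 3×3 matrix |z|^{γ/2}·[[z₂,−z₃,0],[−z₁,0,z₃],[0,z₁,−z₂]], and σ(0)=0. There exists a constant C_γ>0 (one may take C_γ=|γ|/2+1) such that for all z,z̃∈ℝ³\{0}: ‖σ(z)−σ(z̃)‖ ≤ C_γ |z−z̃| ( |z|^{γ/2} + |z̃|^{γ/2} ), where ‖·‖ is the Frobenius norm on 3×3 real matrices. -/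
/-! Since `σ(z)` is a fixed linear pattern applied to `|z|^{γ/2} z`, its Frobenius norm is
`√2 |·|` of that vector, and the problem reduces to estimating `|z|^p z - |w|^p w`. The splitting
`2 (a z - b w) = (a + b)(z - w) + (a - b)(z + w)` leaves the scalar term `|a - b| (|z| + |w|)`,
which after normalising the larger norm to `1` becomes `|r^p - 1| (r + 1) ≲ (1 - r)(r^p + 1)` for `r ∈ (0, 1]`:
for `p ≥ 0` and for `p < 0` alike this is `1 - r^q ≤ (1 + q)(1 - r)` with `q = |p|`, which is
Bernoulli's inequality when `q ≥ 1` and `r ≤ r^q` when `q ≤ 1`. -/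

open scoped ENNReal

noncomputable section

abbrev E3 : Type := EuclideanSpace ℝ (Fin 3)

/-- The square root matrix `σ(z) = |z|^{γ/2} [[z₂,−z₃,0],[−z₁,0,z₃],[0,z₁,−z₂]]`
(with coordinates `z₁ = z 0`, `z₂ = z 1`, `z₃ = z 2`), and `σ(0)=0`. -/
def sigmaMat (γ : ℝ) (z : E3) : Matrix (Fin 3) (Fin 3) ℝ :=
  ‖z‖ ^ (γ / 2) • !![z 1, -(z 2), 0; -(z 0), 0, z 2; 0, z 0, -(z 1)]

/-- Frobenius norm of a 3×3 real matrix. -/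
def frobNorm (M : Matrix (Fin 3) (Fin 3) ℝ) : ℝ :=
  Real.sqrt (∑ i, ∑ j, (M i j) ^ 2)

namespace Real

lemma one_sub_rpow_le {r q : ℝ} (hr₀ : 0 ≤ r) (hr₁ : r ≤ 1) (hq : 0 ≤ q) :
    1 - r ^ q ≤ (1 + q) * (1 - r) := by
  rcases le_total q 1 with hq₁ | hq₁
  · have := self_le_rpow_of_le_one hr₀ hr₁ hq₁
    nlinarith
  · have := one_add_mul_self_le_rpow_one_add (s := r - 1) (by linarith) hq₁
    rw [add_sub_cancel] at this
    nlinarith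

lemma abs_rpow_sub_one_mul_le {r : ℝ} (p : ℝ) (hr₀ : 0 < r) (hr₁ : r ≤ 1) :
    |r ^ p - 1| * (r + 1) ≤ 2 * (1 + |p|) * (1 - r) * (r ^ p + 1) := by
  have hrp : 0 < r ^ p := rpow_pos_of_pos hr₀ p
  rcases le_total 0 p with hp | hp
  · have hle : r ^ p ≤ 1 := rpow_le_one hr₀.le hr₁ hp
    have := one_sub_rpow_le hr₀.le hr₁ hp
    rw [abs_of_nonpos (by linarith), abs_of_nonneg hp]
    nlinarith
  · -- `r ^ p - 1 = r ^ p * (1 - r ^ (-p))`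
    have hfac : r ^ p * r ^ (-p) = 1 := by
      rw [← rpow_add hr₀, add_neg_cancel, rpow_zero]
    have hle : 1 ≤ r ^ p := one_le_rpow_of_pos_of_le_one_of_nonpos hr₀ hr₁ hp
    have := one_sub_rpow_le hr₀.le hr₁ (neg_nonneg.mpr hp)
    rw [abs_of_nonneg (by linarith), abs_of_nonpos hp]
    nlinarith [mul_le_mul_of_nonneg_left this hrp.le]

lemma abs_rpow_sub_rpow_mul_add_le {s t : ℝ} (p : ℝ) (hs : 0 < s) (ht : 0 < t) :
    |s ^ p - t ^ p| * (s + t) ≤ 2 * (1 + |p|) * |s - t| * (s ^ p + t ^ p) := by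
  wlog hst : s ≤ t generalizing s t
  · rw [abs_sub_comm, add_comm s, abs_sub_comm s, add_comm (s ^ p)]
    exact this ht hs (le_of_not_ge hst)
  obtain ⟨r, hr₀, rfl⟩ : ∃ r, 0 < r ∧ s = r * t := ⟨s / t, by positivity, by field_simp⟩
  have hr₁ : r ≤ 1 := by nlinarith
  have key := abs_rpow_sub_one_mul_le p hr₀ hr₁
  have htp : 0 < t ^ p := rpow_pos_of_pos ht p
  rw [mul_rpow hr₀.le ht.le, abs_of_nonpos (by nlinarith : r * t - t ≤ 0)]
  calc |r ^ p * t ^ p - t ^ p| * (r * t + t) = t ^ p * t * (|r ^ p - 1| * (r + 1)) := by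
        rw [← sub_one_mul, abs_mul, abs_of_pos htp]; ring
    _ ≤ t ^ p * t * (2 * (1 + |p|) * (1 - r) * (r ^ p + 1)) := by gcongr
    _ = _ := by ring

end Real

lemma norm_rpow_smul_sub_rpow_smul_le {E : Type*} [NormedAddCommGroup E] [NormedSpace ℝ E]
    (p : ℝ) {x y : E} (hx : x ≠ 0) (hy : y ≠ 0) :
    ‖‖x‖ ^ p • x - ‖y‖ ^ p • y‖ ≤ (3 / 2 + |p|) * ‖x - y‖ * (‖x‖ ^ p + ‖y‖ ^ p) := by
  set a := ‖x‖ ^ p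
  set b := ‖y‖ ^ p
  have ha : 0 < a := Real.rpow_pos_of_pos (norm_pos_iff.mpr hx) p
  have hb : 0 < b := Real.rpow_pos_of_pos (norm_pos_iff.mpr hy) p
  have hsplit : (2 : ℝ) • (a • x - b • y) = (a + b) • (x - y) + (a - b) • (x + y) := by
    simp only [smul_sub, add_smul, sub_smul, smul_add, two_smul]; abel
  have hscalar := Real.abs_rpow_sub_rpow_mul_add_le p (norm_pos_iff.mpr hx) (norm_pos_iff.mpr hy)
  have hnorms : |‖x‖ - ‖y‖| ≤ ‖x - y‖ := abs_norm_sub_norm_le x y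
  have htriangle : 2 * ‖a • x - b • y‖ ≤ (a + b) * ‖x - y‖ + |a - b| * (‖x‖ + ‖y‖) := by
    calc 2 * ‖a • x - b • y‖ = ‖(2 : ℝ) • (a • x - b • y)‖ := by
          rw [norm_smul, Real.norm_two]
      _ ≤ ‖(a + b) • (x - y)‖ + ‖(a - b) • (x + y)‖ := hsplit ▸ norm_add_le _ _
      _ ≤ (a + b) * ‖x - y‖ + |a - b| * (‖x‖ + ‖y‖) := by
          rw [norm_smul, norm_smul, Real.norm_of_nonneg (by positivity), Real.norm_eq_abs]
          gcongr
          exact norm_add_le x y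
  nlinarith [mul_le_mul_of_nonneg_left hnorms (by positivity : (0:ℝ) ≤ 2 * (1 + |p|) * (a + b))]

lemma sigmaMat_sub_sigmaMat (γ : ℝ) (z w : E3) :
    sigmaMat γ z - sigmaMat γ w = sigmaMat 0 (‖z‖ ^ (γ / 2) • z - ‖w‖ ^ (γ / 2) • w) := by
  ext i j
  fin_cases i <;> fin_cases j <;> simp [sigmaMat, mul_sub, neg_add_eq_sub]

lemma frobNorm_sigmaMat_zero (v : E3) : frobNorm (sigmaMat 0 v) = Real.sqrt 2 * ‖v‖ := by
  rw [frobNorm, EuclideanSpace.norm_eq, ← Real.sqrt_mul zero_le_two]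
  congr 1
  simp only [sigmaMat, zero_div, Real.rpow_zero, one_smul, Fin.sum_univ_three, Matrix.of_apply,
    Matrix.cons_val', Matrix.cons_val_fin_one, Matrix.cons_val_zero, Matrix.cons_val_one,
    Matrix.cons_val, Real.norm_eq_abs, sq_abs]
  ring

theorem sigma_lipschitz_estimate_general (γ : ℝ) :
    ∃ C : ℝ, 0 < C ∧
      ∀ z ztil : E3, z ≠ 0 → ztil ≠ 0 →
        frobNorm (sigmaMat γ z - sigmaMat γ ztil) ≤
          C * ‖z - ztil‖ * (‖z‖ ^ (γ / 2) + ‖ztil‖ ^ (γ / 2)) := by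
  refine ⟨Real.sqrt 2 * (3 / 2 + |γ / 2|), by positivity, fun z ztil hz hztil => ?_⟩
  rw [sigmaMat_sub_sigmaMat, frobNorm_sigmaMat_zero, mul_assoc (Real.sqrt 2), mul_assoc (Real.sqrt 2)]
  gcongr
  exact norm_rpow_smul_sub_rpow_smul_le (γ / 2) hz hztil

theorem sigma_lipschitz_estimate (γ : ℝ) (hγ : γ ∈ Set.Ioo (-3 : ℝ) 0) :
    ∃ C : ℝ, 0 < C ∧
      ∀ z ztil : E3, z ≠ 0 → ztil ≠ 0 →
        frobNorm (sigmaMat γ z - sigmaMat γ ztil) ≤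
          C * ‖z - ztil‖ * (‖z‖ ^ (γ / 2) + ‖ztil‖ ^ (γ / 2)) :=
  sigma_lipschitz_estimate_general γ

end
end

section
/- Let γ∈[−2,0) and let E₀>0, H₀>0. There exists a constant c>0, depending only on γ, E₀ and H₀, such that for every nonnegative measurable function f on ℝ³ with ∫_{ℝ³} f(v)dv=1, ∫_{ℝ³}|v|² f(v)dv ≤ E₀ and ∫_{ℝ³} f(v)log f(v) dv ≤ H₀, and for all v,ξ∈ℝ³: Σ_{i,j=1}^3 ā^f_{ij}(v) ξ_i ξ_j ≥ c (1+|v|)^γ |ξ|², where ā^f_{ij}(v) := ∫_{ℝ³} a_{ij}(v−v_*) f(v_*) dv_* and a_{ij}(z)=|z|^γ(|z|²δ_{ij}−z_i z_j). -/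
open MeasureTheory
open scoped ENNReal

noncomputable section

/-- The entries of the matrix `a(z) = |z|^γ (|z|² Id − z ⊗ z)`. -/
def aCoef (γ : ℝ) (z : E3) (i j : Fin 3) : ℝ :=
  ‖z‖ ^ γ * (‖z‖ ^ (2:ℕ) * (if i = j then 1 else 0) - z i * z j)

/-!
Write `ξ = ‖ξ‖ u` with `‖u‖ = 1`. The quadratic form is `‖ξ‖² ∫ ‖v - w‖^γ d(v - w)² f(w) dw`,
where `d(z)² = ‖z‖² - ⟪z, u⟫²` is the squared distance from `z` to the line `ℝ u`. On the set of
`w` with `‖w‖ ≤ R` and `d(v - w) ≥ r` the integrand is at least `(‖v‖ + R)^γ r² f(w)`, so it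
suffices that this set carries half of the mass of `f`. By Chebyshev, the energy bound leaves at
most `1/4` of the mass outside the ball of radius `R`. The rest of the complement lies in a box of
volume `8 R r²`, and a density of entropy at most `H₀` puts mass at most `M |A| + K / log M` on a
set `A`, where `K` also accounts for the negative part of `f log f`; by `-x log x ≤ a x + e^{-a-1}`
with `a = ‖w‖²` that part is controlled by the energy and a Gaussian integral. Taking `M` large and
then `r` small makes this mass at most `1/4`.
-/

open Real Metric
open scoped RealInnerProductSpace

theorem neg_mul_log_le_mul_add_exp (a : ℝ) {x : ℝ} (hx : 0 ≤ x) :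
    -(x * log x) ≤ a * x + exp (-a - 1) := by
  rcases hx.eq_or_lt with rfl | hx
  · simpa using (exp_pos _).le
  have h := add_one_le_exp (-log x - a - 1)
  rw [show -log x - a - 1 = -a - 1 - log x by ring, exp_sub, exp_log hx, le_div_iff₀ hx] at h
  linarith

theorem le_add_div_log {x b M : ℝ} (hx : 0 ≤ x) (hb : 0 ≤ b) (hxb : -(x * log x) ≤ b)
    (hM : 1 < M) : x ≤ M + (x * log x + b) / log M := by
  have hlogM := log_pos hM
  rcases le_or_gt x M with hxM | hMx
  · have : 0 ≤ (x * log x + b) / log M := div_nonneg (by linarith) hlogM.le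
    linarith
  · have hlog : x * log M ≤ x * log x :=
      mul_le_mul_of_nonneg_left (log_le_log (by linarith) hMx.le) hx
    have : x ≤ (x * log x + b) / log M := by rw [le_div_iff₀ hlogM]; linarith
    linarith

theorem rpow_mul_sq_le_one_add_sq {γ x : ℝ} (hγ₂ : -2 ≤ γ) (hγ₀ : γ ≤ 0) (hx : 0 ≤ x) :
    x ^ γ * x ^ 2 ≤ 1 + x ^ 2 := by
  rcases le_total x 1 with hx1 | hx1
  · rcases hx.eq_or_lt with rfl | hx
    · simp
    have : x ^ γ * x ^ 2 ≤ 1 := by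
      rw [← rpow_natCast, ← rpow_add hx]
      exact rpow_le_one hx.le hx1 (by push_cast; linarith)
    linarith [sq_nonneg x]
  · have : x ^ γ ≤ 1 := rpow_le_one_of_one_le_of_nonpos hx1 hγ₀
    nlinarith [sq_nonneg x]

theorem setIntegral_le_of_neg_mul_log_le {α : Type*} [MeasurableSpace α] {μ : Measure α}
    {f g : α → ℝ} (hf0 : ∀ x, 0 ≤ f x)
    (hf : Integrable f μ) (hent : Integrable (fun x => f x * log (f x)) μ) (hg : Integrable g μ)
    (hg0 : ∀ x, 0 ≤ g x) (hfg : ∀ x, -(f x * log (f x)) ≤ g x) {A : Set α} (hA : μ A < ∞)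
    {M : ℝ} (hM : 1 < M) :
    ∫ x in A, f x ∂μ ≤ M * μ.real A + (∫ x, f x * log (f x) ∂μ + ∫ x, g x ∂μ) / log M := by
  have hsum : Integrable (fun x => f x * log (f x) + g x) μ := hent.add hg
  calc ∫ x in A, f x ∂μ ≤ ∫ x in A, (M + (f x * log (f x) + g x) / log M) ∂μ :=
        setIntegral_mono hf.integrableOn
          ((integrableOn_const hA.ne).add (hsum.div_const _).integrableOn)
          fun x => le_add_div_log (hf0 x) (hg0 x) (hfg x) hM
    _ = M * μ.real A + (∫ x in A, (f x * log (f x) + g x) ∂μ) / log M := by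
        rw [integral_add (integrableOn_const hA.ne).integrable
          (hsum.div_const _).integrableOn.integrable, setIntegral_const, integral_div, smul_eq_mul,
          mul_comm]
    _ ≤ M * μ.real A + (∫ x, (f x * log (f x) + g x) ∂μ) / log M :=
        add_le_add le_rfl (div_le_div_of_nonneg_right (setIntegral_le_integral hsum
          (ae_of_all _ fun x => show 0 ≤ f x * log (f x) + g x by linarith [hfg x]))
          (log_pos hM).le)
    _ = _ := by rw [integral_add hent hg]

theorem setIntegral_compl_closedBall_le {E : Type*} [NormedAddCommGroup E] [MeasurableSpace E]
    [OpensMeasurableSpace E] {μ : Measure E} {f : E → ℝ} (hf0 : ∀ x, 0 ≤ f x)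
    (hf : Integrable f μ) (hf2 : Integrable (fun x => ‖x‖ ^ 2 * f x) μ) {R : ℝ} (hR : 0 < R) :
    ∫ x in (closedBall 0 R)ᶜ, f x ∂μ ≤ (∫ x, ‖x‖ ^ 2 * f x ∂μ) / R ^ 2 := by
  have hmarkov : ∀ x ∈ (closedBall (0 : E) R)ᶜ, f x ≤ ‖x‖ ^ 2 * f x / R ^ 2 := by
    intro x hx
    have hRx : R ^ 2 ≤ ‖x‖ ^ 2 := by
      gcongr
      exact (by simpa using hx : R < ‖x‖).le
    rw [le_div_iff₀ (by positivity)]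
    nlinarith [hf0 x]
  calc ∫ x in (closedBall 0 R)ᶜ, f x ∂μ ≤ ∫ x in (closedBall 0 R)ᶜ, ‖x‖ ^ 2 * f x / R ^ 2 ∂μ :=
        setIntegral_mono_on hf.integrableOn (hf2.div_const _).integrableOn
          measurableSet_closedBall.compl hmarkov
    _ ≤ ∫ x, ‖x‖ ^ 2 * f x / R ^ 2 ∂μ :=
        setIntegral_le_integral (hf2.div_const _) (ae_of_all _ fun x => by
          have := hf0 x; positivity)
    _ = _ := integral_div _ _

theorem integrable_comp_sub_mul_of_abs_le {E : Type*} [NormedAddCommGroup E] [MeasurableSpace E]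
    [BorelSpace E] {μ : Measure E} {k f : E → ℝ} {C : ℝ} (hk : Measurable k)
    (hkC : ∀ z, |k z| ≤ C * (1 + ‖z‖ ^ 2)) (hf : Integrable f μ)
    (hf2 : Integrable (fun w => ‖w‖ ^ 2 * f w) μ) (v : E) :
    Integrable (fun w => k (v - w) * f w) μ := by
  have hC : 0 ≤ C := by simpa using (abs_nonneg _).trans (hkC 0)
  refine ((hf.norm.const_mul (C * (1 + 2 * ‖v‖ ^ 2))).add (hf2.norm.const_mul (2 * C))).mono'
    ((hk.comp (measurable_id.const_sub v)).aestronglyMeasurable.mul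
      hf.aestronglyMeasurable) (ae_of_all _ fun w => ?_)
  have hvw : ‖v - w‖ ^ 2 ≤ 2 * ‖v‖ ^ 2 + 2 * ‖w‖ ^ 2 := by
    nlinarith [norm_sub_le v w, norm_nonneg (v - w), sq_nonneg (‖v‖ - ‖w‖)]
  show _ ≤ C * (1 + 2 * ‖v‖ ^ 2) * ‖f w‖ + 2 * C * ‖‖w‖ ^ 2 * f w‖
  simp only [norm_mul, Real.norm_eq_abs, abs_pow, abs_norm]
  calc |k (v - w)| * |f w| ≤ C * (1 + ‖v - w‖ ^ 2) * |f w| := by gcongr; exact hkC _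
    _ ≤ C * (1 + (2 * ‖v‖ ^ 2 + 2 * ‖w‖ ^ 2)) * |f w| := by gcongr
    _ = _ := by ring

section GramDet

variable {E : Type*} [NormedAddCommGroup E] [InnerProductSpace ℝ E]

/-- For a unit vector `ξ`, the squared distance from `z` to the line `ℝ ξ`. -/
def gramDet (z ξ : E) : ℝ := ‖z‖ ^ 2 * ‖ξ‖ ^ 2 - ⟪z, ξ⟫ ^ 2

theorem gramDet_nonneg (z ξ : E) : 0 ≤ gramDet z ξ := by
  rw [gramDet, sub_nonneg, ← mul_pow, ← sq_abs]
  exact pow_le_pow_left₀ (abs_nonneg _) (abs_real_inner_le_norm z ξ) 2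

theorem gramDet_le (z ξ : E) : gramDet z ξ ≤ ‖z‖ ^ 2 * ‖ξ‖ ^ 2 :=
  sub_le_self _ (sq_nonneg _)

theorem gramDet_smul_right (z ξ : E) (t : ℝ) : gramDet z (t • ξ) = t ^ 2 * gramDet z ξ := by
  simp only [gramDet, norm_smul, inner_smul_right, Real.norm_eq_abs, mul_pow, sq_abs]
  ring

theorem continuous_gramDet_left (ξ : E) : Continuous fun z : E => gramDet z ξ := by
  unfold gramDet
  fun_prop

theorem OrthonormalBasis.gramDet_apply_zero (b : OrthonormalBasis (Fin 3) ℝ E) (z : E) :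
    gramDet z (b 0) = b.repr z 1 ^ 2 + b.repr z 2 ^ 2 := by
  rw [gramDet, b.orthonormal.norm_eq_one, ← b.repr.norm_map, EuclideanSpace.real_norm_sq_eq,
    Fin.sum_univ_three, real_inner_comm (b 0) z, ← b.repr_apply_apply]
  ring

theorem rpow_mul_gramDet_le {γ : ℝ} (hγ₂ : -2 ≤ γ) (hγ₀ : γ ≤ 0) (z ξ : E) :
    |‖z‖ ^ γ * gramDet z ξ| ≤ ‖ξ‖ ^ 2 * (1 + ‖z‖ ^ 2) := by
  have hz := rpow_nonneg (norm_nonneg z) γ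
  rw [abs_of_nonneg (mul_nonneg hz (gramDet_nonneg z ξ))]
  calc ‖z‖ ^ γ * gramDet z ξ ≤ ‖z‖ ^ γ * (‖z‖ ^ 2 * ‖ξ‖ ^ 2) := by gcongr; exact gramDet_le z ξ
    _ = ‖ξ‖ ^ 2 * (‖z‖ ^ γ * ‖z‖ ^ 2) := by ring
    _ ≤ ‖ξ‖ ^ 2 * (1 + ‖z‖ ^ 2) := by
        gcongr; exact rpow_mul_sq_le_one_add_sq hγ₂ hγ₀ (norm_nonneg z)

end GramDet

theorem exists_orthonormalBasis_apply_eq {E ι : Type*} [NormedAddCommGroup E]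
    [InnerProductSpace ℝ E] [FiniteDimensional ℝ E] [Fintype ι]
    (hcard : Module.finrank ℝ E = Fintype.card ι) (i : ι) {u : E} (hu : ‖u‖ = 1) :
    ∃ b : OrthonormalBasis ι ℝ E, b i = u := by
  have hu' : Orthonormal ℝ (({i} : Set ι).domRestrict fun _ => u) :=
    orthonormal_subsingleton_iff.2 fun _ => hu
  obtain ⟨b, hb⟩ := hu'.exists_orthonormalBasis_extension_of_card_eq hcard
  exact ⟨b, hb i rfl⟩

theorem measurableSet_gramDet_sub_lt (v u : E3) (c : ℝ) :
    MeasurableSet {w | gramDet (v - w) u < c} :=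
  measurableSet_lt ((continuous_gramDet_left u).measurable.comp (measurable_id.const_sub v))
    measurable_const

theorem volume_closedBall_inter_gramDet_lt_le {u : E3} (hu : ‖u‖ = 1) (v : E3) {R r : ℝ}
    (hR : 0 ≤ R) (hr : 0 ≤ r) :
    volume (closedBall 0 R ∩ {w | gramDet (v - w) u < r ^ 2}) ≤ ENNReal.ofReal (8 * R * r ^ 2) := by
  obtain ⟨b, rfl⟩ := exists_orthonormalBasis_apply_eq (by simp) (0 : Fin 3) hu
  set y := b.repr v
  let box : Set (Fin 3 → ℝ) :=
    Set.univ.pi ![closedBall 0 R, closedBall (y 1) r, closedBall (y 2) r]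
  have hrepr : MeasurePreserving (fun w => WithLp.ofLp (b.repr w)) :=
    (PiLp.volume_preserving_ofLp _).comp b.measurePreserving_repr
  have hsub : closedBall 0 R ∩ {w | gramDet (v - w) (b 0) < r ^ 2} ⊆
      (fun w => WithLp.ofLp (b.repr w)) ⁻¹' box := by
    rintro w ⟨hwR, hw : gramDet (v - w) (b 0) < r ^ 2⟩
    rw [mem_closedBall_zero_iff] at hwR
    rw [b.gramDet_apply_zero, map_sub, PiLp.sub_apply, PiLp.sub_apply] at hw
    have hsq (k : Fin 3) (hk : (y k - b.repr w k) ^ 2 < r ^ 2) : |b.repr w k - y k| ≤ r := by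
      rw [abs_sub_comm]
      exact (abs_lt_of_sq_lt_sq hk hr).le
    have h0 : |b.repr w 0| ≤ R :=
      ((Real.norm_eq_abs _).symm.trans_le (PiLp.norm_apply_le _ 0)).trans
        ((b.repr.norm_map w).trans_le hwR)
    have h1 := hsq 1 (by nlinarith [sq_nonneg (y 2 - b.repr w 2)])
    have h2 := hsq 2 (by nlinarith [sq_nonneg (y 1 - b.repr w 1)])
    simp [box, Fin.forall_fin_succ, Real.dist_eq, h0, h1, h2]
  calc volume (closedBall 0 R ∩ {w | gramDet (v - w) (b 0) < r ^ 2})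
      ≤ volume ((fun w => WithLp.ofLp (b.repr w)) ⁻¹' box) := measure_mono hsub
    _ = volume box := hrepr.measure_preimage (MeasurableSet.univ_pi fun i => by
          fin_cases i <;> exact measurableSet_closedBall).nullMeasurableSet
    _ = ENNReal.ofReal (8 * R * r ^ 2) := by
        rw [volume_pi_pi, Fin.prod_univ_three]
        simp only [Fin.isValue, Matrix.cons_val, Real.volume_closedBall]
        rw [← ENNReal.ofReal_mul (by positivity), ← ENNReal.ofReal_mul (by positivity)]
        ring_nf

theorem integrable_exp_neg_sq_norm_sub_one : Integrable fun w : E3 => exp (-‖w‖ ^ 2 - 1) := by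
  refine ((GaussianFourier.integrable_cexp_neg_mul_sq_norm_add (V := E3) (b := 1) (by simp) 0
    0).norm.const_mul (exp (-1))).congr (ae_of_all _ fun w => ?_)
  simp only [← Complex.ofReal_pow, neg_mul, one_mul, inner_zero_left, Complex.ofReal_zero,
    mul_zero, add_zero, Complex.norm_exp, Complex.neg_re, Complex.ofReal_re, ← exp_add, exp_eq_exp]
  ring

theorem abs_aCoef_le {γ : ℝ} (hγ₂ : -2 ≤ γ) (hγ₀ : γ ≤ 0) (z : E3) (i j : Fin 3) :
    |aCoef γ z i j| ≤ 2 * (1 + ‖z‖ ^ 2) := by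
  have hcoord (k : Fin 3) : |z k| ≤ ‖z‖ :=
    (Real.norm_eq_abs _).symm.trans_le (PiLp.norm_apply_le z k)
  have hδ : |‖z‖ ^ 2 * (if i = j then 1 else 0)| ≤ ‖z‖ ^ 2 := by split_ifs <;> simp
  have hzz : |z i * z j| ≤ ‖z‖ ^ 2 := by
    rw [abs_mul, sq]
    exact mul_le_mul (hcoord i) (hcoord j) (abs_nonneg _) (norm_nonneg _)
  have hz := rpow_nonneg (norm_nonneg z) γ
  rw [aCoef, abs_mul, abs_of_nonneg hz]
  calc ‖z‖ ^ γ * |‖z‖ ^ 2 * (if i = j then 1 else 0) - z i * z j|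
        ≤ ‖z‖ ^ γ * (2 * ‖z‖ ^ 2) := by
        gcongr; linarith [abs_sub (‖z‖ ^ 2 * (if i = j then 1 else 0)) (z i * z j)]
    _ = 2 * (‖z‖ ^ γ * ‖z‖ ^ 2) := by ring
    _ ≤ 2 * (1 + ‖z‖ ^ 2) := by gcongr; exact rpow_mul_sq_le_one_add_sq hγ₂ hγ₀ (norm_nonneg z)

theorem measurable_aCoef (γ : ℝ) (i j : Fin 3) : Measurable fun z => aCoef γ z i j := by
  unfold aCoef
  fun_prop

theorem sum_aCoef_mul_mul (γ : ℝ) (z ξ : E3) :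
    ∑ i, ∑ j, aCoef γ z i j * ξ i * ξ j = ‖z‖ ^ γ * gramDet z ξ := by
  simp only [aCoef, gramDet, EuclideanSpace.real_norm_sq_eq ξ, PiLp.inner_apply,
    RCLike.inner_apply, conj_trivial, Fin.sum_univ_three]
  simp only [↓reduceIte, Fin.isValue, Fin.reduceEq, mul_one, mul_zero]
  ring

theorem sum_integral_aCoef_mul_mul {γ : ℝ} {f : E3 → ℝ} {v : E3}
    (hint : ∀ i j, Integrable fun w => aCoef γ (v - w) i j * f w) (ξ : E3) :
    ∑ i, ∑ j, (∫ w, aCoef γ (v - w) i j * f w) * ξ i * ξ j =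
      ∫ w, ‖v - w‖ ^ γ * gramDet (v - w) ξ * f w := by
  have hint' (i j : Fin 3) : Integrable fun w => aCoef γ (v - w) i j * f w * ξ i * ξ j :=
    ((hint i j).mul_const _).mul_const _
  calc ∑ i, ∑ j, (∫ w, aCoef γ (v - w) i j * f w) * ξ i * ξ j
      = ∑ i, ∑ j, ∫ w, aCoef γ (v - w) i j * f w * ξ i * ξ j := by simp only [integral_mul_const]
    _ = ∫ w, ∑ i, ∑ j, aCoef γ (v - w) i j * f w * ξ i * ξ j := by
        rw [integral_finsetSum _ fun i _ => integrable_finsetSum _ fun j _ => hint' i j]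
        exact Finset.sum_congr rfl fun i _ => (integral_finsetSum _ fun j _ => hint' i j).symm
    _ = ∫ w, ‖v - w‖ ^ γ * gramDet (v - w) ξ * f w := by
        simp only [← sum_aCoef_mul_mul, Finset.sum_mul, mul_right_comm _ (f _)]

structure HasBoundedEnergyEntropy (E₀ H₀ : ℝ) (f : E3 → ℝ) : Prop where
  nonneg : ∀ v, 0 ≤ f v
  integrable : Integrable f
  integral_eq_one : ∫ v, f v = 1
  integrable_moment : Integrable fun v => ‖v‖ ^ 2 * f v
  moment_le : ∫ v, ‖v‖ ^ 2 * f v ≤ E₀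
  integrable_entropy : Integrable fun v => f v * log (f v)
  entropy_le : ∫ v, f v * log (f v) ≤ H₀

namespace HasBoundedEnergyEntropy

variable {E₀ H₀ : ℝ} {f : E3 → ℝ}

theorem setIntegral_le (hf : HasBoundedEnergyEntropy E₀ H₀ f) {A : Set E3} (hA : volume A < ∞)
    {M : ℝ} (hM : 1 < M) :
    ∫ w in A, f w ≤ M * volume.real A + (H₀ + E₀ + ∫ w : E3, exp (-‖w‖ ^ 2 - 1)) / log M := by
  have hG := integrable_exp_neg_sq_norm_sub_one
  have hg : Integrable fun w => ‖w‖ ^ 2 * f w + exp (-‖w‖ ^ 2 - 1) := hf.integrable_moment.add hG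
  refine (setIntegral_le_of_neg_mul_log_le hf.nonneg hf.integrable hf.integrable_entropy
    hg (fun w => add_nonneg (mul_nonneg (sq_nonneg _) (hf.nonneg w))
      (exp_pos _).le) (fun w => neg_mul_log_le_mul_add_exp _ (hf.nonneg w)) hA hM).trans ?_
  rw [integral_add hf.integrable_moment hG]
  exact add_le_add le_rfl (div_le_div_of_nonneg_right (by linarith [hf.moment_le, hf.entropy_le])
    (log_pos hM).le)

theorem half_le_setIntegral (hf : HasBoundedEnergyEntropy E₀ H₀ f) {R M r : ℝ} (hR : 0 < R)
    (hRE : 4 * E₀ ≤ R ^ 2) (hM : 1 < M)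
    (hMH : 8 * (H₀ + E₀ + ∫ w : E3, exp (-‖w‖ ^ 2 - 1)) ≤ log M) (hr : 0 ≤ r)
    (hrRM : 64 * R * M * r ^ 2 ≤ 1) {u : E3} (hu : ‖u‖ = 1) (v : E3) :
    1 / 2 ≤ ∫ w in closedBall 0 R \ {w | gramDet (v - w) u < r ^ 2}, f w := by
  set B : Set E3 := closedBall 0 R
  set A : Set E3 := {w | gramDet (v - w) u < r ^ 2}
  have hA : MeasurableSet A := measurableSet_gramDet_sub_lt v u _
  have htail : ∫ w in Bᶜ, f w ≤ 1 / 4 := by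
    calc ∫ w in Bᶜ, f w ≤ (∫ w, ‖w‖ ^ 2 * f w) / R ^ 2 :=
          setIntegral_compl_closedBall_le hf.nonneg hf.integrable hf.integrable_moment hR
      _ ≤ E₀ / R ^ 2 := by gcongr; exact hf.moment_le
      _ ≤ 1 / 4 := by rw [div_le_iff₀ (by positivity)]; linarith
  have hvol := volume_closedBall_inter_gramDet_lt_le hu v hR.le hr
  have hvol' : volume.real (B ∩ A) ≤ 8 * R * r ^ 2 :=
    ENNReal.toReal_le_of_le_ofReal (by positivity) hvol
  have hbad : ∫ w in B ∩ A, f w ≤ 1 / 4 := by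
    calc ∫ w in B ∩ A, f w
        ≤ M * volume.real (B ∩ A) + (H₀ + E₀ + ∫ w : E3, exp (-‖w‖ ^ 2 - 1)) / log M :=
          hf.setIntegral_le (hvol.trans_lt ENNReal.ofReal_lt_top) hM
      _ ≤ M * (8 * R * r ^ 2) + 1 / 8 :=
          add_le_add (by gcongr) (by rw [div_le_iff₀ (log_pos hM)]; linarith)
      _ ≤ 1 / 4 := by nlinarith
  have hsplitB := integral_add_compl (s := B) measurableSet_closedBall hf.integrable
  have hsplitA := integral_inter_add_sdiff (μ := volume) hA (hf.integrable.integrableOn (s := B))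
  linarith [hf.integral_eq_one]

theorem le_integral_of_norm_eq_one (hf : HasBoundedEnergyEntropy E₀ H₀ f) {γ : ℝ} (hγ₂ : -2 ≤ γ)
    (hγ₀ : γ ≤ 0) {R M r : ℝ} (hR : 0 < R) (hRE : 4 * E₀ ≤ R ^ 2) (hM : 1 < M)
    (hMH : 8 * (H₀ + E₀ + ∫ w : E3, exp (-‖w‖ ^ 2 - 1)) ≤ log M) (hr : 0 < r)
    (hrRM : 64 * R * M * r ^ 2 ≤ 1) {u : E3} (hu : ‖u‖ = 1) (v : E3) :
    (‖v‖ + R) ^ γ * r ^ 2 / 2 ≤ ∫ w, ‖v - w‖ ^ γ * gramDet (v - w) u * f w := by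
  set S : Set E3 := closedBall 0 R \ {w | gramDet (v - w) u < r ^ 2}
  have hS : MeasurableSet S := measurableSet_closedBall.diff (measurableSet_gramDet_sub_lt v u _)
  have hint : Integrable fun w => ‖v - w‖ ^ γ * gramDet (v - w) u * f w :=
    integrable_comp_sub_mul_of_abs_le (k := fun z => ‖z‖ ^ γ * gramDet z u)
      ((measurable_norm.pow_const γ).mul (continuous_gramDet_left u).measurable)
      (rpow_mul_gramDet_le hγ₂ hγ₀ · u) hf.integrable
      hf.integrable_moment v
  have hlow : ∀ w ∈ S, (‖v‖ + R) ^ γ * r ^ 2 * f w ≤ ‖v - w‖ ^ γ * gramDet (v - w) u * f w := by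
    rintro w ⟨hwR, hw⟩
    have hgram : r ^ 2 ≤ gramDet (v - w) u := not_lt.1 hw
    have hvw : r ^ 2 ≤ ‖v - w‖ ^ 2 := by simpa [hu] using hgram.trans (gramDet_le (v - w) u)
    have hvw₀ : 0 < ‖v - w‖ := by nlinarith [norm_nonneg (v - w)]
    have hvwR : ‖v - w‖ ≤ ‖v‖ + R := (norm_sub_le v w).trans (by simpa using hwR)
    gcongr ?_ * f w
    · exact hf.nonneg w
    · exact mul_le_mul (rpow_le_rpow_of_nonpos hvw₀ hvwR hγ₀) hgram (sq_nonneg r)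
        (rpow_nonneg (norm_nonneg _) _)
  calc (‖v‖ + R) ^ γ * r ^ 2 / 2 = (‖v‖ + R) ^ γ * r ^ 2 * (1 / 2) := by ring
    _ ≤ (‖v‖ + R) ^ γ * r ^ 2 * ∫ w in S, f w := by
        gcongr
        exact hf.half_le_setIntegral hR hRE hM hMH hr.le hrRM hu v
    _ = ∫ w in S, (‖v‖ + R) ^ γ * r ^ 2 * f w := (integral_const_mul _ _).symm
    _ ≤ ∫ w in S, ‖v - w‖ ^ γ * gramDet (v - w) u * f w :=
        setIntegral_mono_on (hf.integrable.const_mul _).integrableOn hint.integrableOn hS hlow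
    _ ≤ ∫ w, ‖v - w‖ ^ γ * gramDet (v - w) u * f w :=
        setIntegral_le_integral hint (ae_of_all _ fun w => mul_nonneg (mul_nonneg
          (rpow_nonneg (norm_nonneg _) _) (gramDet_nonneg _ _)) (hf.nonneg w))

theorem le_integral (hf : HasBoundedEnergyEntropy E₀ H₀ f) {γ : ℝ} (hγ₂ : -2 ≤ γ) (hγ₀ : γ ≤ 0)
    {R M r : ℝ} (hR : 1 ≤ R) (hRE : 4 * E₀ ≤ R ^ 2) (hM : 1 < M)
    (hMH : 8 * (H₀ + E₀ + ∫ w : E3, exp (-‖w‖ ^ 2 - 1)) ≤ log M) (hr : 0 < r)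
    (hrRM : 64 * R * M * r ^ 2 ≤ 1) (v ξ : E3) :
    R ^ γ * r ^ 2 / 2 * (1 + ‖v‖) ^ γ * ‖ξ‖ ^ 2 ≤ ∫ w, ‖v - w‖ ^ γ * gramDet (v - w) ξ * f w := by
  rcases eq_or_ne ξ 0 with rfl | hξ
  · simp [gramDet]
  set u := ‖ξ‖⁻¹ • ξ
  have hgram (z : E3) : gramDet z ξ = ‖ξ‖ ^ 2 * gramDet z u := by
    rw [← gramDet_smul_right, smul_inv_smul₀ (norm_ne_zero_iff.2 hξ)]
  have hRv : R ^ γ * (1 + ‖v‖) ^ γ ≤ (‖v‖ + R) ^ γ := by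
    rw [← mul_rpow (by positivity) (by positivity)]
    exact rpow_le_rpow_of_nonpos (by positivity) (by nlinarith [norm_nonneg v]) hγ₀
  calc R ^ γ * r ^ 2 / 2 * (1 + ‖v‖) ^ γ * ‖ξ‖ ^ 2
      = ‖ξ‖ ^ 2 * (R ^ γ * (1 + ‖v‖) ^ γ * r ^ 2 / 2) := by ring
    _ ≤ ‖ξ‖ ^ 2 * ((‖v‖ + R) ^ γ * r ^ 2 / 2) := by gcongr
    _ ≤ ‖ξ‖ ^ 2 * ∫ w, ‖v - w‖ ^ γ * gramDet (v - w) u * f w := by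
        gcongr
        exact hf.le_integral_of_norm_eq_one hγ₂ hγ₀ (by linarith) hRE hM hMH hr hrRM
          (norm_smul_inv_norm hξ) v
    _ = ∫ w, ‖v - w‖ ^ γ * gramDet (v - w) ξ * f w := by
        rw [← integral_const_mul]
        simp_rw [hgram]
        congr 1
        ext w
        ring

end HasBoundedEnergyEntropy

theorem landau_ellipticity
    (γ : ℝ) (hγ : γ ∈ Set.Ico (-2 : ℝ) 0) (E₀ H₀ : ℝ) (hE₀ : 0 < E₀) (hH₀ : 0 < H₀) :
    ∃ c : ℝ, 0 < c ∧
      ∀ f : E3 → ℝ, Measurable f → (∀ v, 0 ≤ f v) →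
        Integrable f volume → (∫ v, f v) = 1 →
        Integrable (fun v => ‖v‖ ^ (2:ℕ) * f v) volume →
        (∫ v, ‖v‖ ^ (2:ℕ) * f v) ≤ E₀ →
        Integrable (fun v => f v * Real.log (f v)) volume →
        (∫ v, f v * Real.log (f v)) ≤ H₀ →
        ∀ v ξ : E3,
          c * (1 + ‖v‖) ^ γ * ‖ξ‖ ^ (2:ℕ) ≤
            ∑ i, ∑ j, (∫ w, aCoef γ (v - w) i j * f w) * ξ i * ξ j := by
  obtain ⟨hγ₂, hγ₀⟩ := hγ
  set G : ℝ := ∫ w : E3, exp (-‖w‖ ^ 2 - 1)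
  have hG : 0 ≤ G := integral_nonneg fun _ => (exp_pos _).le
  set R : ℝ := 1 + E₀
  set M : ℝ := exp (8 * (H₀ + E₀ + G))
  set r : ℝ := (8 * R * M)⁻¹
  have hM : 1 < M := one_lt_exp_iff.2 (by positivity)
  have hrRM : 64 * R * M * r ^ 2 ≤ 1 := by
    rw [show 64 * R * M * r ^ 2 = (R * M)⁻¹ by simp only [r]; field_simp; ring]
    exact inv_le_one_of_one_le₀ (one_le_mul_of_one_le_of_one_le (by linarith) hM.le)
  refine ⟨R ^ γ * r ^ 2 / 2, by positivity, fun f _ hf0 hfi hf1 hf2i hf2 hent hH v ξ => ?_⟩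
  have hf : HasBoundedEnergyEntropy E₀ H₀ f := ⟨hf0, hfi, hf1, hf2i, hf2, hent, hH⟩
  rw [sum_integral_aCoef_mul_mul fun i j => integrable_comp_sub_mul_of_abs_le
    (measurable_aCoef γ i j) (abs_aCoef_le hγ₂ hγ₀.le · i j) hfi hf2i v]
  exact hf.le_integral hγ₂ hγ₀.le (by linarith) (by nlinarith [sq_nonneg (1 - E₀)]) hM
    (by rw [log_exp]) (by positivity) hrRM v ξ
end
end

section
/- Let γ∈(−3,0) and p>3/(3+γ). There exists a constant C_{γ,p}>0 such that for every nonnegative measurable f:ℝ³→ℝ with ∫_{ℝ³} f(v)dv=1 and f∈L^p(ℝ³): ∬_{ℝ³×ℝ³} |v−v_*|^{γ} f(v_*) f(v)^{p} dv dv_* ≤ C_{γ,p} ( 1 + ‖f‖_{L^p}^{2p} ). -/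
/-!
Split the kernel as `|z|^γ ≤ 1_{|z|<1} |z|^γ + 1`. The bounded part contributes at most
`∫ f = 1` to the inner integral `∫ |v - w|^γ f(w) dw`. For the singular part, Hölder's
inequality with the conjugate exponent `q = p / (p - 1)` gives the bound `A ‖f‖_p` with
`A = ‖1_{|z|<1} |z|^γ‖_q`, which is finite because `γ q > -3` is exactly `p > 3 / (3 + γ)`.
Integrating `(A ‖f‖_p + 1) f(v)^p` in `v` yields `(A ‖f‖_p + 1) ‖f‖_p^p`, and
`‖f‖_p^(1+p), ‖f‖_p^p ≤ 1 + ‖f‖_p^(2p)`.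
-/

open MeasureTheory
open scoped ENNReal

noncomputable section

open Metric

theorem lintegral_ball_norm_rpow_lt_top {E : Type*} [NormedAddCommGroup E] [NormedSpace ℝ E]
    [FiniteDimensional ℝ E] [Nontrivial E] [MeasurableSpace E] [BorelSpace E]
    (μ : Measure E) [μ.IsAddHaarMeasure] {s : ℝ} (hs : -(Module.finrank ℝ E : ℝ) < s)
    (r : ℝ) :
    ∫⁻ x in ball 0 r, ENNReal.ofReal (‖x‖ ^ s) ∂μ < ∞ := by
  have hint : IntegrableOn (fun x : E ↦ ‖x‖ ^ s) (ball 0 r) μ := by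
    refine integrableOn_ball_of_norm_le_rpow (C := 1) (α := -s) Module.finrank_pos
      (by linarith) (ae_of_all _ fun x ↦ ?_) (measurable_norm.pow_const s).aestronglyMeasurable
    simp [abs_of_nonneg (Real.rpow_nonneg (norm_nonneg x) s)]
  exact (hasFiniteIntegral_iff_ofReal (ae_of_all _ fun x ↦ by positivity)).1
    hint.hasFiniteIntegral

theorem ofReal_norm_rpow_le_indicator_ball_add_one {G : Type*} [SeminormedAddCommGroup G]
    {s : ℝ} (hs : s ≤ 0) (z : G) :
    ENNReal.ofReal (‖z‖ ^ s) ≤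
      (ball 0 1).indicator (fun z ↦ ENNReal.ofReal (‖z‖ ^ s)) z + 1 := by
  by_cases hz : z ∈ ball (0 : G) 1
  · simp [Set.indicator_of_mem hz]
  · rw [Set.indicator_of_notMem hz, zero_add, ENNReal.ofReal_le_one]
    exact Real.rpow_le_one_of_one_le_of_nonpos (by simpa using hz) hs

section Convolution

variable {G : Type*} [NormedAddCommGroup G] [MeasurableSpace G] [BorelSpace G]
  {μ : Measure G} [μ.IsAddLeftInvariant] [μ.IsNegInvariant]

theorem lintegral_mul_sub_le_of_holderConjugate {p q : ℝ} (hpq : p.HolderConjugate q)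
    {K g : G → ℝ≥0∞} (hK : Measurable K) (hg : AEMeasurable g μ) (v : G) :
    ∫⁻ w, K (v - w) * g w ∂μ ≤
      (∫⁻ z, K z ^ q ∂μ) ^ (1 / q) * (∫⁻ w, g w ^ p ∂μ) ^ (1 / p) := by
  rw [← lintegral_sub_left_eq_self (fun z ↦ K z ^ q) v]
  exact ENNReal.lintegral_mul_le_Lp_mul_Lq μ hpq.symm
    (hK.comp (measurable_const_sub v)).aemeasurable hg

theorem lintegral_norm_sub_rpow_mul_le {s p q : ℝ} (hs : s ≤ 0) (hpq : p.HolderConjugate q)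
    {g : G → ℝ≥0∞} (hg : AEMeasurable g μ) (v : G) :
    ∫⁻ w, ENNReal.ofReal (‖v - w‖ ^ s) * g w ∂μ ≤
      (∫⁻ z in ball 0 1, ENNReal.ofReal (‖z‖ ^ (s * q)) ∂μ) ^ (1 / q) *
        (∫⁻ w, g w ^ p ∂μ) ^ (1 / p) + ∫⁻ w, g w ∂μ := by
  set K := (ball (0 : G) 1).indicator fun z ↦ ENNReal.ofReal (‖z‖ ^ s)
  have hK : Measurable K := (by fun_prop : Measurable _).indicator measurableSet_ball
  have hKq : ∀ z, K z ^ q =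
      (ball (0 : G) 1).indicator (fun z ↦ ENNReal.ofReal (‖z‖ ^ (s * q))) z := by
    intro z
    by_cases hz : z ∈ ball (0 : G) 1
    · simp only [K, Set.indicator_of_mem hz]
      rw [ENNReal.ofReal_rpow_of_nonneg (by positivity) hpq.symm.nonneg,
        Real.rpow_mul (norm_nonneg z)]
    · simp only [K, Set.indicator_of_notMem hz, ENNReal.zero_rpow_of_pos hpq.symm.pos]
  calc ∫⁻ w, ENNReal.ofReal (‖v - w‖ ^ s) * g w ∂μ
      ≤ ∫⁻ w, K (v - w) * g w + g w ∂μ := by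
        refine lintegral_mono fun w ↦ ?_
        simpa only [add_mul, one_mul] using
          mul_le_mul_left (ofReal_norm_rpow_le_indicator_ball_add_one hs (v - w)) (g w)
      _ = ∫⁻ w, K (v - w) * g w ∂μ + ∫⁻ w, g w ∂μ := lintegral_add_right' _ hg
      _ ≤ _ := by
        gcongr
        refine (lintegral_mul_sub_le_of_holderConjugate hpq hK hg v).trans_eq ?_
        rw [lintegral_congr hKq, lintegral_indicator measurableSet_ball]

end Convolution

theorem ENNReal.rpow_le_one_add_rpow {x : ℝ≥0∞} {a b : ℝ} (ha : 0 ≤ a) (hab : a ≤ b) :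
    x ^ a ≤ 1 + x ^ b := by
  rcases le_total x 1 with hx | hx
  · exact (ENNReal.rpow_le_one hx ha).trans le_self_add
  · exact (ENNReal.rpow_le_rpow_of_exponent_le hx hab).trans le_add_self

theorem ENNReal.mul_add_one_mul_rpow_le {A x : ℝ≥0∞} {p : ℝ} (hp : 1 ≤ p) :
    (A * x + 1) * x ^ p ≤ (A + 1) * (1 + x ^ (2 * p)) := by
  have hx : x * x ^ p = x ^ (1 + p) := by
    rw [ENNReal.rpow_add_of_nonneg _ _ zero_le_one (by linarith), ENNReal.rpow_one]
  calc (A * x + 1) * x ^ p = A * x ^ (1 + p) + x ^ p := by rw [← hx]; ring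
    _ ≤ A * (1 + x ^ (2 * p)) + (1 + x ^ (2 * p)) := by
        gcongr <;> exact ENNReal.rpow_le_one_add_rpow (by linarith) (by linarith)
    _ = (A + 1) * (1 + x ^ (2 * p)) := by ring

theorem Real.neg_lt_mul_conjExponent {d γ p : ℝ} (hdγ : 0 < d + γ) (hp1 : 1 < p)
    (hp : d / (d + γ) < p) : -d < γ * p.conjExponent := by
  rw [div_lt_iff₀ hdγ] at hp
  rw [Real.conjExponent, ← mul_div_assoc, lt_div_iff₀ (by linarith)]
  linarith

theorem lintegral_lintegral_ofReal_mul_rpow_eq {α : Type*} [MeasurableSpace α] {μ : Measure α}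
    {k : α → α → ℝ} (hk : ∀ v w, 0 ≤ k v w) {f : α → ℝ} (hf : ∀ v, 0 ≤ f v) {p : ℝ}
    (hp : 0 ≤ p) :
    ∫⁻ v, ∫⁻ w, ENNReal.ofReal (k v w * f w * f v ^ p) ∂μ ∂μ =
      ∫⁻ v, (∫⁻ w, ENNReal.ofReal (k v w) * ‖f w‖ₑ ∂μ) * ‖f v‖ₑ ^ p ∂μ := by
  refine lintegral_congr fun v ↦ ?_
  rw [← lintegral_mul_const' _ _ (ENNReal.rpow_ne_top_of_nonneg hp enorm_ne_top)]
  refine lintegral_congr fun w ↦ ?_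
  rw [ENNReal.ofReal_mul (mul_nonneg (hk v w) (hf w)), ENNReal.ofReal_mul (hk v w),
    ← ENNReal.ofReal_rpow_of_nonneg (hf v) hp, Real.enorm_eq_ofReal (hf w),
    Real.enorm_eq_ofReal (hf v)]

theorem landau_Lp_production_bound
    (γ : ℝ) (hγ : γ ∈ Set.Ioo (-3 : ℝ) 0) (p : ℝ) (hp : 3 / (3 + γ) < p) :
    ∃ C : ℝ, 0 < C ∧
      ∀ f : E3 → ℝ, Measurable f → (∀ v, 0 ≤ f v) →
        (∫⁻ v, ENNReal.ofReal (f v)) = 1 →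
        MemLp f (ENNReal.ofReal p) volume →
        (∫⁻ v, ∫⁻ w, ENNReal.ofReal (‖v - w‖ ^ γ * f w * f v ^ p)) ≤
          ENNReal.ofReal C *
            (1 + eLpNorm f (ENNReal.ofReal p) volume ^ (2 * p)) := by
  obtain ⟨hγ3, hγ0⟩ := hγ
  have hp1 : 1 < p := lt_of_le_of_lt ((one_le_div (by linarith)).2 (by linarith)) hp
  have hpq : p.HolderConjugate p.conjExponent := .conjExponent hp1
  set A := (∫⁻ z in ball (0 : E3) 1, ENNReal.ofReal (‖z‖ ^ (γ * p.conjExponent))) ^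
    (1 / p.conjExponent)
  have hA : A ≠ ∞ := ENNReal.rpow_ne_top_of_nonneg (one_div_nonneg.2 hpq.symm.nonneg)
    (lintegral_ball_norm_rpow_lt_top volume
      (by simpa using Real.neg_lt_mul_conjExponent (by linarith) hp1 hp) 1).ne
  refine ⟨A.toReal + 1, by positivity, fun f hf hf0 hmass _ ↦ ?_⟩
  have hN : ∫⁻ v, ‖f v‖ₑ ^ p = eLpNorm f (ENNReal.ofReal p) volume ^ p := by
    rw [eLpNorm_eq_eLpNorm' (ENNReal.ofReal_pos.2 (by linarith)).ne' ENNReal.ofReal_ne_top,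
      ENNReal.toReal_ofReal (by linarith), lintegral_rpow_enorm_eq_rpow_eLpNorm' (by linarith)]
  set N := eLpNorm f (ENNReal.ofReal p) volume
  have hinner : ∀ v, ∫⁻ w, ENNReal.ofReal (‖v - w‖ ^ γ) * ‖f w‖ₑ ≤ A * N + 1 := fun v ↦ by
    have := lintegral_norm_sub_rpow_mul_le hγ0.le hpq hf.enorm.aemeasurable v (μ := volume)
    rwa [hN, ← ENNReal.rpow_mul, mul_one_div_cancel (by linarith), ENNReal.rpow_one,
      lintegral_congr fun w ↦ Real.enorm_eq_ofReal (hf0 w), hmass] at this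
  calc _ = ∫⁻ v, (∫⁻ w, ENNReal.ofReal (‖v - w‖ ^ γ) * ‖f w‖ₑ) * ‖f v‖ₑ ^ p :=
        lintegral_lintegral_ofReal_mul_rpow_eq (fun _ _ ↦ by positivity) hf0 (by linarith)
    _ ≤ ∫⁻ v, (A * N + 1) * ‖f v‖ₑ ^ p :=
        lintegral_mono fun v ↦ mul_le_mul_left (hinner v) _
    _ = (A * N + 1) * N ^ p := by rw [lintegral_const_mul _ (by fun_prop), hN]
    _ ≤ (A + 1) * (1 + N ^ (2 * p)) := ENNReal.mul_add_one_mul_rpow_le hp1.le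
    _ = _ := by
        rw [ENNReal.ofReal_add ENNReal.toReal_nonneg zero_le_one, ENNReal.ofReal_toReal hA,
          ENNReal.ofReal_one]

end
end

section
/- Let γ∈(−3,0), p>3/(3+γ) and T>0. Let (f_t)_{t∈[0,T]} be a family of probability densities on ℝ³ with f_t∈L^p(ℝ³) for all t, such that u(t):=‖f_t‖_{L^p}^p is differentiable on [0,T] and satisfies u′(t) ≤ 2(γ+3)(p−1) ∬_{ℝ³×ℝ³} |v−v_*|^{γ} f_t(v_*) f_t(v)^{p} dv dv_* for all t∈[0,T]. Then there exists a constant C_{γ,p}>0, depending only on γ and p, such that, setting T* := (π/2 − arctan(‖f₀‖_{L^p}^p))/C_{γ,p}, one has for all t∈[0,T] with t<T*: ‖f_t‖_{L^p}^p ≤ tan( arctan(‖f₀‖_{L^p}^p) + C_{γ,p} t ). -/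
open MeasureTheory
open scoped ENNReal

noncomputable section

open Metric Set Real Module

/-!
Since `γ ≤ 0`, `|x|^γ ≤ 1_{|x| < 1} |x|^γ + 1`. Hölder's inequality on the unit ball, with the
conjugate exponent `q = p / (p - 1)`, bounds `∫ |v - w|^γ f(w) dw` by `K ‖f‖_p + ‖f‖_1`
uniformly in `v`, where `K^q = ∫_{|x|<1} |x|^{γ q} dx` is finite because `p > 3 / (3 + γ)` is
equivalent to `γ q > -3`. For a probability density this bounds the right-hand side of the
differential inequality by `c (K ‖f‖_p + 1) ‖f‖_p^p ≤ C (1 + u²)`, so `arctan u - C t` is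
nonincreasing, and taking `tan` gives the bound as long as `arctan u(0) + C t < π / 2`.
-/

theorem lintegral_comp_sub_mul_le_Lq_mul_Lp {G : Type*} [AddCommGroup G] [MeasurableSpace G]
    [MeasurableAdd G] [MeasurableNeg G] {μ : Measure G} [μ.IsAddLeftInvariant] [μ.IsNegInvariant]
    {p q : ℝ} (hpq : p.HolderConjugate q) {k g : G → ℝ≥0∞} (hk : AEMeasurable k μ)
    (hg : AEMeasurable g μ) (v : G) :
    ∫⁻ w, k (v - w) * g w ∂μ ≤ (∫⁻ x, k x ^ q ∂μ) ^ (1 / q) * (∫⁻ w, g w ^ p ∂μ) ^ (1 / p) := by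
  have hg' : AEMeasurable (fun x => g (v - x)) μ :=
    hg.comp_quasiMeasurePreserving (Measure.measurePreserving_sub_left μ v).quasiMeasurePreserving
  calc ∫⁻ w, k (v - w) * g w ∂μ = ∫⁻ x, k x * g (v - x) ∂μ := by
        simpa using lintegral_sub_left_eq_self (μ := μ) (fun x => k x * g (v - x)) v
    _ ≤ (∫⁻ x, k x ^ q ∂μ) ^ (1 / q) * (∫⁻ x, g (v - x) ^ p ∂μ) ^ (1 / p) :=
        ENNReal.lintegral_mul_le_Lp_mul_Lq μ hpq.symm hk hg'
    _ = (∫⁻ x, k x ^ q ∂μ) ^ (1 / q) * (∫⁻ w, g w ^ p ∂μ) ^ (1 / p) := by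
        rw [lintegral_sub_left_eq_self (fun x => g x ^ p) v]

theorem ofReal_rpow_norm_le_indicator_add_one {E : Type*} [SeminormedAddCommGroup E] {s : ℝ}
    (hs : s ≤ 0) (x : E) :
    ENNReal.ofReal (‖x‖ ^ s) ≤ (ball 0 1).indicator (fun y => ENNReal.ofReal (‖y‖ ^ s)) x + 1 := by
  by_cases hx : x ∈ ball (0 : E) 1
  · rw [indicator_of_mem hx]
    exact le_self_add
  · rw [indicator_of_notMem hx, zero_add, ← ENNReal.ofReal_one]
    refine ENNReal.ofReal_le_ofReal (rpow_le_one_of_one_le_of_nonpos ?_ hs)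
    simpa using hx

theorem lintegral_ofReal_rpow_norm_sub_mul_le {E : Type*} [NormedAddCommGroup E]
    [MeasurableSpace E] [BorelSpace E] {μ : Measure E} [μ.IsAddLeftInvariant] [μ.IsNegInvariant]
    {s p q : ℝ} (hs : s ≤ 0) (hpq : p.HolderConjugate q) {g : E → ℝ≥0∞} (hg : AEMeasurable g μ)
    (v : E) :
    ∫⁻ w, ENNReal.ofReal (‖v - w‖ ^ s) * g w ∂μ ≤
      (∫⁻ x in ball 0 1, ENNReal.ofReal (‖x‖ ^ (s * q)) ∂μ) ^ (1 / q) *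
        (∫⁻ w, g w ^ p ∂μ) ^ (1 / p) + ∫⁻ w, g w ∂μ := by
  set k : E → ℝ≥0∞ := (ball 0 1).indicator fun y => ENNReal.ofReal (‖y‖ ^ s)
  have hk : Measurable k := by
    refine Measurable.indicator ?_ measurableSet_ball
    fun_prop
  have hkq : ∫⁻ x, k x ^ q ∂μ = ∫⁻ x in ball 0 1, ENNReal.ofReal (‖x‖ ^ (s * q)) ∂μ := by
    rw [← lintegral_indicator measurableSet_ball]
    congr 1 with x
    by_cases hx : x ∈ ball (0 : E) 1
    · simp only [k, indicator_of_mem hx]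
      rw [ENNReal.ofReal_rpow_of_nonneg (by positivity) hpq.symm.nonneg,
        ← rpow_mul (norm_nonneg x)]
    · simp [k, indicator_of_notMem hx, hpq.symm.pos]
  calc ∫⁻ w, ENNReal.ofReal (‖v - w‖ ^ s) * g w ∂μ ≤ ∫⁻ w, k (v - w) * g w + g w ∂μ := by
        refine lintegral_mono fun w => ?_
        grw [ofReal_rpow_norm_le_indicator_add_one hs (v - w), add_mul, one_mul]
    _ = ∫⁻ w, k (v - w) * g w ∂μ + ∫⁻ w, g w ∂μ := lintegral_add_right' _ hg
    _ ≤ _ := by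
        grw [lintegral_comp_sub_mul_le_Lq_mul_Lp hpq hk.aemeasurable hg v, hkq]

theorem integral_rpow_eq_toReal_eLpNorm_rpow {α : Type*} [MeasurableSpace α] {μ : Measure α}
    {f : α → ℝ} {p : ℝ} (hp : 0 < p) (hf : ∀ x, 0 ≤ f x) (hfp : MemLp f (ENNReal.ofReal p) μ) :
    ∫ x, f x ^ p ∂μ = (eLpNorm f (ENNReal.ofReal p) μ).toReal ^ p := by
  rw [hfp.eLpNorm_eq_integral_rpow_norm (by simpa using hp) ENNReal.ofReal_ne_top,
    ENNReal.toReal_ofReal hp.le, ENNReal.toReal_ofReal (by positivity),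
    rpow_inv_rpow (by positivity) hp.ne']
  simp_rw [norm_of_nonneg (hf _)]

theorem integral_integral_mul_le_of_forall_integral_le {α β : Type*} [MeasurableSpace α]
    [MeasurableSpace β] {μ : Measure α} {ν : Measure β} {k : α → β → ℝ} {f : β → ℝ} {g : α → ℝ}
    {A : ℝ} (hk : ∀ v w, 0 ≤ k v w) (hf : ∀ w, 0 ≤ f w) (hg : ∀ v, 0 ≤ g v)
    (hgi : Integrable g μ) (hA : ∀ v, ∫ w, k v w * f w ∂ν ≤ A) :
    ∫ v, ∫ w, k v w * f w * g v ∂ν ∂μ ≤ A * ∫ v, g v ∂μ := by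
  simp_rw [integral_mul_const, ← integral_const_mul]
  refine integral_mono_of_nonneg (ae_of_all _ fun v => ?_) (hgi.const_mul A)
    (ae_of_all _ fun v => mul_le_mul_of_nonneg_right (hA v) (hg v))
  exact mul_nonneg (integral_nonneg fun w => mul_nonneg (hk v w) (hf w)) (hg v)

theorem mul_rpow_self_le_one_add_sq {x p : ℝ} (hx : 0 ≤ x) (hp : 1 ≤ p) :
    x * x ^ p ≤ 1 + (x ^ p) ^ 2 := by
  rcases le_total x 1 with h | h
  · have : x ^ p ≤ 1 := rpow_le_one hx h (by linarith)
    nlinarith [rpow_nonneg hx p]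
  · have : x ≤ x ^ p := by simpa using rpow_le_rpow_of_exponent_le h hp
    nlinarith

section AddHaar

variable {E : Type*} [NormedAddCommGroup E] [NormedSpace ℝ E] [FiniteDimensional ℝ E]
  [Nontrivial E] [MeasurableSpace E] [BorelSpace E] {μ : Measure E} [μ.IsAddHaarMeasure]

theorem setLIntegral_ball_ofReal_rpow_norm_lt_top {s : ℝ} (hs : -(finrank ℝ E : ℝ) < s) (r : ℝ) :
    ∫⁻ x in ball 0 r, ENNReal.ofReal (‖x‖ ^ s) ∂μ < ∞ := by
  refine Integrable.lintegral_lt_top (integrableOn_ball_of_norm_le_rpow (C := 1) (α := -s)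
    finrank_pos (by linarith) (ae_of_all _ fun x => ?_)
    (measurable_norm.pow_const s).aestronglyMeasurable)
  rw [norm_of_nonneg (by positivity), one_mul, neg_neg]

theorem exists_integral_rpow_norm_sub_mul_le {s p q : ℝ} (hs : s ≤ 0)
    (hpq : p.HolderConjugate q) (hsq : -(finrank ℝ E : ℝ) < s * q) :
    ∃ K, 0 ≤ K ∧ ∀ f : E → ℝ, (∀ x, 0 ≤ f x) → Integrable f μ → MemLp f (ENNReal.ofReal p) μ →
      ∀ v, ∫ w, ‖v - w‖ ^ s * f w ∂μ ≤
        K * (eLpNorm f (ENNReal.ofReal p) μ).toReal + ∫ w, f w ∂μ := by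
  set I := ∫⁻ x in ball 0 1, ENNReal.ofReal (‖x‖ ^ (s * q)) ∂μ
  have hI : I ^ (1 / q) ≠ ∞ :=
    ENNReal.rpow_ne_top_of_nonneg (by simpa using hpq.symm.nonneg)
      (setLIntegral_ball_ofReal_rpow_norm_lt_top hsq 1).ne
  refine ⟨(I ^ (1 / q)).toReal, ENNReal.toReal_nonneg, fun f hf hfi hfp v => ?_⟩
  have hN : (∫⁻ w, ENNReal.ofReal (f w) ^ p ∂μ) ^ (1 / p) = eLpNorm f (ENNReal.ofReal p) μ := by
    rw [eLpNorm_eq_lintegral_rpow_enorm_toReal (by simpa using hpq.pos) ENNReal.ofReal_ne_top,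
      ENNReal.toReal_ofReal hpq.nonneg]
    simp_rw [Real.enorm_eq_ofReal (hf _)]
  have hint : ∫ w, f w ∂μ = (∫⁻ w, ENNReal.ofReal (f w) ∂μ).toReal :=
    integral_eq_lintegral_of_nonneg_ae (ae_of_all _ hf) hfi.1
  have hker := lintegral_ofReal_rpow_norm_sub_mul_le hs hpq hfi.1.aemeasurable.ennreal_ofReal v
  rw [hN] at hker
  calc ∫ w, ‖v - w‖ ^ s * f w ∂μ
      = (∫⁻ w, ENNReal.ofReal (‖v - w‖ ^ s) * ENNReal.ofReal (f w) ∂μ).toReal := by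
        have hmeas : Measurable fun w => ‖v - w‖ ^ s := by fun_prop
        rw [integral_eq_lintegral_of_nonneg_ae
          (ae_of_all _ fun w => mul_nonneg (by positivity) (hf w))
          (hmeas.aestronglyMeasurable.mul hfi.1)]
        simp_rw [ENNReal.ofReal_mul (rpow_nonneg (norm_nonneg _) s)]
    _ ≤ (I ^ (1 / q) * eLpNorm f (ENNReal.ofReal p) μ + ∫⁻ w, ENNReal.ofReal (f w) ∂μ).toReal :=
        ENNReal.toReal_mono (by finiteness [hI, hfp.2.ne, hfi.lintegral_lt_top.ne]) hker
    _ = _ := by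
        rw [ENNReal.toReal_add (by finiteness [hI, hfp.2.ne]) hfi.lintegral_lt_top.ne,
          ENNReal.toReal_mul, hint]

theorem exists_integral_integral_rpow_norm_sub_mul_le_one_add_sq {s p q : ℝ} (hs : s ≤ 0)
    (hpq : p.HolderConjugate q) (hsq : -(finrank ℝ E : ℝ) < s * q) :
    ∃ K, 0 < K ∧ ∀ f : E → ℝ, (∀ x, 0 ≤ f x) → Integrable f μ → ∫ x, f x ∂μ = 1 →
      MemLp f (ENNReal.ofReal p) μ →
      ∫ v, ∫ w, ‖v - w‖ ^ s * f w * f v ^ p ∂μ ∂μ ≤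
        K * (1 + ((eLpNorm f (ENNReal.ofReal p) μ).toReal ^ p) ^ 2) := by
  obtain ⟨K, hK, hconv⟩ := exists_integral_rpow_norm_sub_mul_le (μ := μ) hs hpq hsq
  refine ⟨K + 1, by positivity, fun f hf hfi hf1 hfp => ?_⟩
  have hfpi : Integrable (fun v => f v ^ p) μ := by
    have := hfp.integrable_norm_rpow (by simpa using hpq.pos) ENNReal.ofReal_ne_top
    simpa [ENNReal.toReal_ofReal hpq.nonneg, norm_of_nonneg (hf _)] using this
  have hdouble := integral_integral_mul_le_of_forall_integral_le (k := fun v w => ‖v - w‖ ^ s)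
    (g := fun v => f v ^ p) (fun _ _ => by positivity) hf (fun v => rpow_nonneg (hf v) p) hfpi
    (fun v => (hconv f hf hfi hfp v).trans_eq (by rw [hf1]))
  rw [integral_rpow_eq_toReal_eLpNorm_rpow hpq.pos hf hfp] at hdouble
  set N := (eLpNorm f (ENNReal.ofReal p) μ).toReal
  have hN : 0 ≤ N := ENNReal.toReal_nonneg
  have hNp : 0 ≤ N ^ p := rpow_nonneg hN p
  have hmul := mul_rpow_self_le_one_add_sq hN hpq.lt.le
  refine hdouble.trans ?_
  nlinarith [sq_nonneg (N ^ p - 1), mul_le_mul_of_nonneg_left hmul hK]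

end AddHaar

theorem arctan_le_arctan_add_mul_of_le_mul_one_add_sq {u u' : ℝ → ℝ} {a b C : ℝ}
    (hu : ContinuousOn u (Icc a b))
    (hu' : ∀ t ∈ Ioo a b, HasDerivWithinAt u (u' t) (Ioo a b) t)
    (hbound : ∀ t ∈ Ioo a b, u' t ≤ C * (1 + u t ^ 2)) :
    ∀ t ∈ Icc a b, arctan (u t) ≤ arctan (u a) + C * (t - a) := by
  have hanti : AntitoneOn (fun t => arctan (u t) - C * t) (Icc a b) := by
    refine antitoneOn_of_hasDerivWithinAt_nonpos (convex_Icc a b)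
      ((continuous_arctan.comp_continuousOn hu).sub (continuousOn_const.mul continuousOn_id))
      (f' := fun t => 1 / (1 + u t ^ 2) * u' t - C) (fun t ht => ?_) (fun t ht => ?_)
    · rw [interior_Icc] at ht ⊢
      exact ((hasDerivAt_arctan (u t)).comp_hasDerivWithinAt t (hu' t ht)).sub
        ((hasDerivWithinAt_id t _).const_mul C |>.congr_deriv (mul_one C))
    · rw [interior_Icc] at ht
      have hpos : 0 < 1 + u t ^ 2 := by positivity
      rw [sub_nonpos, one_div_mul_eq_div, div_le_iff₀ hpos]
      exact hbound t ht
  intro t ht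
  have := hanti (left_mem_Icc.2 (ht.1.trans ht.2)) ht ht.1
  simp only at this
  linarith

theorem le_tan_of_arctan_le {x y : ℝ} (h : arctan y ≤ x) (hx : x < π / 2) : y ≤ tan x :=
  calc y = tan (arctan y) := (tan_arctan y).symm
    _ ≤ tan x := strictMonoOn_tan.monotoneOn
        ⟨neg_pi_div_two_lt_arctan y, arctan_lt_pi_div_two y⟩
        ⟨(neg_pi_div_two_lt_arctan y).trans_le h, hx⟩ h

theorem Lp_norm_local_bound
    (γ : ℝ) (hγ : γ ∈ Set.Ioo (-3 : ℝ) 0) (p : ℝ) (hp : 3 / (3 + γ) < p) :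
    ∃ C : ℝ, 0 < C ∧
      ∀ (T : ℝ), 0 < T →
      ∀ (f : ℝ → E3 → ℝ) (u u' : ℝ → ℝ),
        (∀ t ∈ Set.Icc (0:ℝ) T, (∀ v, 0 ≤ f t v) ∧ Integrable (f t) volume ∧
          (∫ v, f t v) = 1 ∧ MemLp (f t) (ENNReal.ofReal p) volume) →
        (∀ t ∈ Set.Icc (0:ℝ) T,
          u t = (eLpNorm (f t) (ENNReal.ofReal p) volume).toReal ^ p) →
        (∀ t ∈ Set.Icc (0:ℝ) T, HasDerivWithinAt u (u' t) (Set.Icc 0 T) t) →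
        (∀ t ∈ Set.Icc (0:ℝ) T,
          u' t ≤ 2 * (γ + 3) * (p - 1) *
            ∫ v, ∫ w, ‖v - w‖ ^ γ * f t w * f t v ^ p) →
        ∀ t ∈ Set.Icc (0:ℝ) T,
          t < (Real.pi / 2 - Real.arctan (u 0)) / C →
          u t ≤ Real.tan (Real.arctan (u 0) + C * t) := by
  obtain ⟨hγ₀, hγ₁⟩ := hγ
  have h3γ : 0 < 3 + γ := by linarith
  have hp₁ : 1 < p := lt_of_le_of_lt ((one_le_div h3γ).2 (by linarith)) hp
  have hc : 0 < 2 * (γ + 3) * (p - 1) := mul_pos (by linarith) (by linarith)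
  have hγq : -(finrank ℝ E3 : ℝ) < γ * (p / (p - 1)) := by
    rw [finrank_euclideanSpace_fin, mul_div_assoc', lt_div_iff₀ (by linarith)]
    push_cast
    linarith [(div_lt_iff₀ h3γ).1 hp]
  obtain ⟨K, hK, hbound⟩ := exists_integral_integral_rpow_norm_sub_mul_le_one_add_sq
    (μ := volume) hγ₁.le (HolderConjugate.conjExponent hp₁) hγq
  refine ⟨2 * (γ + 3) * (p - 1) * K, mul_pos hc hK, ?_⟩
  intro T _ f u u' hf hu hu' hineq t ht htC
  have hu'_le : ∀ x ∈ Ioo 0 T, u' x ≤ 2 * (γ + 3) * (p - 1) * K * (1 + u x ^ 2) := by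
    intro x hx
    obtain ⟨hf₀, hfi, hf₁, hfp⟩ := hf x (Ioo_subset_Icc_self hx)
    rw [hu x (Ioo_subset_Icc_self hx), mul_assoc]
    exact (hineq x (Ioo_subset_Icc_self hx)).trans
      (mul_le_mul_of_nonneg_left (hbound (f x) hf₀ hfi hf₁ hfp) hc.le)
  have harctan := arctan_le_arctan_add_mul_of_le_mul_one_add_sq
    (fun x hx => (hu' x hx).continuousWithinAt)
    (fun x hx => (hu' x (Ioo_subset_Icc_self hx)).mono Ioo_subset_Icc_self) hu'_le t ht
  refine le_tan_of_arctan_le (by simpa using harctan) ?_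
  rw [lt_div_iff₀ (mul_pos hc hK)] at htC
  linarith

end
end
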